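/- (Proposition 3, concrete stability bound for the input-shaping closed loop.) Let additionally γ, K_i, K_p > 0 and U* ∈ ℝ be constants, and let U : [0,∞) → ℝ be continuously differentiable with C·w_z(1,t) = −γ·U(t) and K_p·U'(t) = −K_i·(U(t) − U*) + γ·w_tt(1,t) for all t ≥ 0. Define M(t) = ∫₀¹ ( (C·w_zt(z,t))² + w_tt(z,t)² + w_zt(z,t)² + (ρ·w_tt(z,t))² ) dz + (U(t) − U*)². Then for all t ≥ 0, M(t) ≤ (γ₂/γ₁)·M(0), where γ₁ = (1/4)·min{1/C, C, ρ, 1/ρ, 2·K_i} and γ₂ = (1/4)·max{1/C, C, ρ, 1/ρ, 2·K_i}. In particular, the closed-loop equilibrium is stable in the sense of Lyapunov with respect to the norm whose square is M. -/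

import Mathlib

/-!
The closed-loop storage `E = S + (Ki/2)(U - U*)²` is a Lyapunov function. Differentiating
the wave equation in time and integrating by parts gives
`dE/dt = [C w_zt w_tt]_{z=0}^{z=1} - b ∫ w_tt² + Ki (U - U*) U'`; the clamp kills the term
at `z = 0`, and the time derivative of the boundary condition together with the control law
turn the term at `z = 1` into `-Kp U'² - Ki (U - U*) U'`, so `dE/dt = -Kp U'² - b ∫ w_tt² ≤ 0`.
Moreover `4E = ∫ ((1/C)(C w_zt)² + ρ w_tt² + C w_zt² + (1/ρ)(ρ w_tt)²) + 2 Ki (U - U*)²`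
weighs the terms of `M`, hence `γ₁ M ≤ E ≤ γ₂ M` and `γ₁ M(t) ≤ E(t) ≤ E(0) ≤ γ₂ M(0)`.
-/

open MeasureTheory intervalIntegral Set

lemma HasDerivAt.eq_of_eqOn_Ici {f g : ℝ → ℝ} {f' g' a t : ℝ} (hf : HasDerivAt f f' t)
    (hg : HasDerivAt g g' t) (ht : a ≤ t) (hfg : EqOn f g (Ici a)) : f' = g' :=
  (uniqueDiffOn_Ici a t ht).eq_deriv _ hf.hasDerivWithinAt
    (hg.hasDerivWithinAt.congr (fun _ hs => hfg hs) (hfg ht))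

lemma hasDerivAt_intervalIntegral_of_continuous {F F' : ℝ → ℝ → ℝ}
    (hF : Continuous (Function.uncurry F)) (hF' : Continuous (Function.uncurry F'))
    (hd : ∀ x t, HasDerivAt (fun y => F y t) (F' x t) x) (a b x₀ : ℝ) :
    HasDerivAt (fun x => ∫ t in a..b, F x t) (∫ t in a..b, F' x₀ t) x₀ := by
  obtain ⟨K, hK⟩ :=
    ((isCompact_closedBall x₀ 1).prod isCompact_uIcc).exists_bound_of_continuousOn hF'.continuousOn
  exact (hasDerivAt_integral_of_dominated_loc_of_deriv_le (bound := fun _ => K)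
    (Metric.ball_mem_nhds x₀ one_pos)
    (.of_forall fun x => (hF.uncurry_left x).aestronglyMeasurable)
    ((hF.uncurry_left x₀).intervalIntegrable a b)
    (hF'.uncurry_left x₀).aestronglyMeasurable
    (.of_forall fun t ht x hx =>
      hK (x, t) ⟨Metric.ball_subset_closedBall hx, uIoc_subset_uIcc ht⟩)
    intervalIntegrable_const (.of_forall fun t _ x _ => hd x t)).2

noncomputable section ClosedLoop

variable (C ρ Ki Ustar : ℝ) (wzt wtt : ℝ → ℝ → ℝ) (U : ℝ → ℝ)

def extendedStateNormSq (t : ℝ) : ℝ :=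
  (∫ z in (0:ℝ)..1, ((C * wzt z t)^2 + (wtt z t)^2 + (wzt z t)^2 + (ρ * wtt z t)^2))
    + (U t - Ustar)^2

def closedLoopStorage (t : ℝ) : ℝ :=
  (∫ z in (0:ℝ)..1, (C/2 * (wzt z t)^2 + ρ/2 * (wtt z t)^2)) + Ki/2 * (U t - Ustar)^2

def lowerGain : ℝ := (1/4) * min (min (1/C) C) (min (min ρ (1/ρ)) (2*Ki))

def upperGain : ℝ := (1/4) * max (max (1/C) C) (max (max ρ (1/ρ)) (2*Ki))

end ClosedLoop

lemma storage_density_eq_weighted {C ρ : ℝ} (hC : C ≠ 0) (hρ : ρ ≠ 0) (a e : ℝ) :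
    C/2 * a^2 + ρ/2 * e^2
      = (1/4) * ((1/C) * (C*a)^2 + ρ * e^2 + C * a^2 + (1/ρ) * (ρ*e)^2) := by
  linear_combination (-(1/4) * C * a^2) * inv_mul_cancel₀ hC
    + (-(1/4) * ρ * e^2) * inv_mul_cancel₀ hρ

lemma le_storage_density {C ρ m : ℝ} (hC : C ≠ 0) (hρ : ρ ≠ 0) (h₁ : m ≤ 1/C) (h₂ : m ≤ C)
    (h₃ : m ≤ ρ) (h₄ : m ≤ 1/ρ) (a e : ℝ) :
    (1/4) * m * ((C*a)^2 + e^2 + a^2 + (ρ*e)^2) ≤ C/2 * a^2 + ρ/2 * e^2 := by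
  rw [storage_density_eq_weighted hC hρ]
  linarith [mul_le_mul_of_nonneg_right h₁ (sq_nonneg (C*a)),
    mul_le_mul_of_nonneg_right h₂ (sq_nonneg a), mul_le_mul_of_nonneg_right h₃ (sq_nonneg e),
    mul_le_mul_of_nonneg_right h₄ (sq_nonneg (ρ*e))]

lemma storage_density_le {C ρ M : ℝ} (hC : C ≠ 0) (hρ : ρ ≠ 0) (h₁ : 1/C ≤ M) (h₂ : C ≤ M)
    (h₃ : ρ ≤ M) (h₄ : 1/ρ ≤ M) (a e : ℝ) :
    C/2 * a^2 + ρ/2 * e^2 ≤ (1/4) * M * ((C*a)^2 + e^2 + a^2 + (ρ*e)^2) := by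
  rw [storage_density_eq_weighted hC hρ]
  linarith [mul_le_mul_of_nonneg_right h₁ (sq_nonneg (C*a)),
    mul_le_mul_of_nonneg_right h₂ (sq_nonneg a), mul_le_mul_of_nonneg_right h₃ (sq_nonneg e),
    mul_le_mul_of_nonneg_right h₄ (sq_nonneg (ρ*e))]

section GainBounds

variable {C ρ Ki Ustar t : ℝ} {wzt wtt : ℝ → ℝ → ℝ} {U : ℝ → ℝ}

lemma lowerGain_mul_le_closedLoopStorage (hC : C ≠ 0) (hρ : ρ ≠ 0)
    (hzt : Continuous fun z => wzt z t) (htt : Continuous fun z => wtt z t) :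
    lowerGain C ρ Ki * extendedStateNormSq C ρ Ustar wzt wtt U t
      ≤ closedLoopStorage C ρ Ki Ustar wzt wtt U t := by
  have hmin := le_refl (min (min (1/C) C) (min (min ρ (1/ρ)) (2*Ki)))
  simp only [le_min_iff] at hmin
  obtain ⟨⟨h₁, h₂⟩, ⟨h₃, h₄⟩, h₅⟩ := hmin
  have hint : lowerGain C ρ Ki * (∫ z in (0:ℝ)..1,
        ((C * wzt z t)^2 + (wtt z t)^2 + (wzt z t)^2 + (ρ * wtt z t)^2))
      ≤ ∫ z in (0:ℝ)..1, (C/2 * (wzt z t)^2 + ρ/2 * (wtt z t)^2) := by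
    rw [← intervalIntegral.integral_const_mul]
    exact intervalIntegral.integral_mono_on zero_le_one
      ((by fun_prop : Continuous _).intervalIntegrable 0 1)
      ((by fun_prop : Continuous _).intervalIntegrable 0 1)
      fun z _ => le_storage_density hC hρ h₁ h₂ h₃ h₄ _ _
  have hU := mul_le_mul_of_nonneg_right h₅ (sq_nonneg (U t - Ustar))
  unfold extendedStateNormSq closedLoopStorage
  unfold lowerGain at hint ⊢
  linarith

lemma closedLoopStorage_le_upperGain_mul (hC : C ≠ 0) (hρ : ρ ≠ 0)
    (hzt : Continuous fun z => wzt z t) (htt : Continuous fun z => wtt z t) :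
    closedLoopStorage C ρ Ki Ustar wzt wtt U t
      ≤ upperGain C ρ Ki * extendedStateNormSq C ρ Ustar wzt wtt U t := by
  have hmax := le_refl (max (max (1/C) C) (max (max ρ (1/ρ)) (2*Ki)))
  simp only [max_le_iff] at hmax
  obtain ⟨⟨h₁, h₂⟩, ⟨h₃, h₄⟩, h₅⟩ := hmax
  have hint : (∫ z in (0:ℝ)..1, (C/2 * (wzt z t)^2 + ρ/2 * (wtt z t)^2))
      ≤ upperGain C ρ Ki * (∫ z in (0:ℝ)..1,
        ((C * wzt z t)^2 + (wtt z t)^2 + (wzt z t)^2 + (ρ * wtt z t)^2)) := by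
    rw [← intervalIntegral.integral_const_mul]
    exact intervalIntegral.integral_mono_on zero_le_one
      ((by fun_prop : Continuous _).intervalIntegrable 0 1)
      ((by fun_prop : Continuous _).intervalIntegrable 0 1)
      fun z _ => storage_density_le hC hρ h₁ h₂ h₃ h₄ _ _
  have hU := mul_le_mul_of_nonneg_right h₅ (sq_nonneg (U t - Ustar))
  unfold extendedStateNormSq closedLoopStorage
  unfold upperGain at hint ⊢
  linarith

end GainBounds

lemma integral_power_balance {C ρ b : ℝ} {f f' g g' h : ℝ → ℝ}
    (hf : ∀ z, HasDerivAt f (f' z) z) (hg : ∀ z, HasDerivAt g (g' z) z)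
    (hf'c : Continuous f') (hg'c : Continuous g')
    (hpde : ∀ z ∈ Icc (0:ℝ) 1, ρ * h z = C * f' z - b * g z) :
    ∫ z in (0:ℝ)..1, (C * (f z * g' z) + ρ * (g z * h z))
      = C * (f 1 * g 1 - f 0 * g 0) - b * ∫ z in (0:ℝ)..1, g z ^ 2 := by
  have hfc : Continuous f := continuous_iff_continuousAt.2 fun z => (hf z).continuousAt
  have hgc : Continuous g := continuous_iff_continuousAt.2 fun z => (hg z).continuousAt
  have hflux : ∫ z in (0:ℝ)..1, (f' z * g z + f z * g' z) = f 1 * g 1 - f 0 * g 0 :=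
    intervalIntegral.integral_eq_sub_of_hasDerivAt (fun z _ => (hf z).mul (hg z))
      ((by fun_prop : Continuous _).intervalIntegrable 0 1)
  calc ∫ z in (0:ℝ)..1, (C * (f z * g' z) + ρ * (g z * h z))
      = ∫ z in (0:ℝ)..1, (C * (f' z * g z + f z * g' z) - b * g z ^ 2) := by
        refine intervalIntegral.integral_congr fun z hz => ?_
        rw [uIcc_of_le zero_le_one] at hz
        linear_combination g z * hpde z hz
    _ = C * (f 1 * g 1 - f 0 * g 0) - b * ∫ z in (0:ℝ)..1, g z ^ 2 := by
        rw [intervalIntegral.integral_sub ((by fun_prop : Continuous _).intervalIntegrable 0 1)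
          ((by fun_prop : Continuous _).intervalIntegrable 0 1)]
        simp only [intervalIntegral.integral_const_mul, hflux]

lemma storage_rate_nonpos {C ρ b γ Kp Ki u u' : ℝ} {f f' g g' h : ℝ → ℝ}
    (hb : 0 ≤ b) (hKp : 0 ≤ Kp)
    (hf : ∀ z, HasDerivAt f (f' z) z) (hg : ∀ z, HasDerivAt g (g' z) z)
    (hf'c : Continuous f') (hg'c : Continuous g')
    (hpde : ∀ z ∈ Icc (0:ℝ) 1, ρ * h z = C * f' z - b * g z)
    (hclamp : g 0 = 0) (hbc : C * f 1 = -γ * u') (hlaw : Kp * u' = -Ki * u + γ * g 1) :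
    (∫ z in (0:ℝ)..1, (C * (f z * g' z) + ρ * (g z * h z))) + Ki * u * u' ≤ 0 := by
  have hdamp : 0 ≤ b * ∫ z in (0:ℝ)..1, g z ^ 2 :=
    mul_nonneg hb (intervalIntegral.integral_nonneg zero_le_one fun z _ => sq_nonneg (g z))
  have hcontrol : C * f 1 * g 1 + Ki * u * u' = -(Kp * u' ^ 2) := by
    linear_combination g 1 * hbc + u' * hlaw
  rw [integral_power_balance hf hg hf'c hg'c hpde, hclamp]
  nlinarith [mul_nonneg hKp (sq_nonneg u')]

lemma hasDerivAt_closedLoopStorage {C ρ Ki Ustar t u' : ℝ} {wzt wtt wztt wttt : ℝ → ℝ → ℝ}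
    {U : ℝ → ℝ} (hwztc : Continuous (Function.uncurry wzt))
    (hwttc : Continuous (Function.uncurry wtt)) (hwzttc : Continuous (Function.uncurry wztt))
    (hwtttc : Continuous (Function.uncurry wttt))
    (hwztt : ∀ z s, HasDerivAt (fun τ => wzt z τ) (wztt z s) s)
    (hwttt : ∀ z s, HasDerivAt (fun τ => wtt z τ) (wttt z s) s) (hU : HasDerivAt U u' t) :
    HasDerivAt (closedLoopStorage C ρ Ki Ustar wzt wtt U)
      ((∫ z in (0:ℝ)..1, (C * (wzt z t * wztt z t) + ρ * (wtt z t * wttt z t)))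
        + Ki * (U t - Ustar) * u') t := by
  have hswap : ∀ {v : ℝ → ℝ → ℝ}, Continuous (Function.uncurry v) →
      Continuous fun p : ℝ × ℝ => v p.2 p.1 := fun hv => hv.comp continuous_swap
  have hint := hasDerivAt_intervalIntegral_of_continuous
    (F := fun τ z => C/2 * (wzt z τ)^2 + ρ/2 * (wtt z τ)^2)
    (F' := fun τ z => C * (wzt z τ * wztt z τ) + ρ * (wtt z τ * wttt z τ))
    (by have := hswap hwztc; have := hswap hwttc; fun_prop)
    (by
      have := hswap hwztc; have := hswap hwttc; have := hswap hwzttc; have := hswap hwtttc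
      fun_prop)
    (fun τ z => ((((hwztt z τ).fun_pow 2).const_mul (C/2)).add
      (((hwttt z τ).fun_pow 2).const_mul (ρ/2))).congr_deriv (by push_cast; ring)) 0 1 t
  exact (hint.add (((hU.sub_const Ustar).fun_pow 2).const_mul (Ki/2))).congr_deriv
    (by push_cast; ring)

theorem input_shaping_stability_bound_general
    (ρ C b : ℝ) (hρ : 0 < ρ) (hC : 0 < C) (hb : 0 < b)
    (w wz wt wzz wzt wtt : ℝ → ℝ → ℝ)
    (hwt : ∀ z t : ℝ, HasDerivAt (fun τ => w z τ) (wt z t) t)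
    (hwzt' : ∀ z t : ℝ, HasDerivAt (fun τ => wz z τ) (wzt z t) t)
    (hwtt : ∀ z t : ℝ, HasDerivAt (fun τ => wt z τ) (wtt z t) t)
    (hwztc : Continuous (Function.uncurry wzt))
    (hwttc : Continuous (Function.uncurry wtt))
    (hpde : ∀ z ∈ Set.Icc (0:ℝ) 1, ∀ t : ℝ, 0 ≤ t →
      ρ * wtt z t = C * wzz z t - b * wt z t)
    (hclamp : ∀ t : ℝ, 0 ≤ t → w 0 t = 0)
    (wzzt wztt wttt : ℝ → ℝ → ℝ)
    (hwzzt : ∀ z t : ℝ, HasDerivAt (fun τ => wzz z τ) (wzzt z t) t)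
    (hwzzt' : ∀ z t : ℝ, HasDerivAt (fun ζ => wzt ζ t) (wzzt z t) z)
    (hwztt : ∀ z t : ℝ, HasDerivAt (fun τ => wzt z τ) (wztt z t) t)
    (hwztt' : ∀ z t : ℝ, HasDerivAt (fun ζ => wtt ζ t) (wztt z t) z)
    (hwttt : ∀ z t : ℝ, HasDerivAt (fun τ => wtt z τ) (wttt z t) t)
    (hwzztc : Continuous (Function.uncurry wzzt))
    (hwzttc : Continuous (Function.uncurry wztt))
    (hwtttc : Continuous (Function.uncurry wttt))
    (γ Ki Kp Ustar : ℝ) (hKi : 0 < Ki) (hKp : 0 < Kp)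
    (U U' : ℝ → ℝ)
    (hU : ∀ t : ℝ, HasDerivAt U (U' t) t)
    (hbc : ∀ t : ℝ, 0 ≤ t → C * wz 1 t = -γ * U t)
    (hlaw : ∀ t : ℝ, 0 ≤ t → Kp * U' t = -Ki * (U t - Ustar) + γ * wtt 1 t) :
    ∀ t : ℝ, 0 ≤ t →
      ((∫ z in (0:ℝ)..1, ((C * wzt z t)^2 + (wtt z t)^2 + (wzt z t)^2 + (ρ * wtt z t)^2)) + (U t - Ustar)^2)
        ≤ ((1/4) * max (max (1/C) C) (max (max ρ (1/ρ)) (2*Ki)))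
            / ((1/4) * min (min (1/C) C) (min (min ρ (1/ρ)) (2*Ki)))
          * ((∫ z in (0:ℝ)..1, ((C * wzt z (0:ℝ))^2 + (wtt z (0:ℝ))^2 + (wzt z (0:ℝ))^2 + (ρ * wtt z (0:ℝ))^2)) + (U (0:ℝ) - Ustar)^2) := by
  intro t ht
  have hwt0 : ∀ τ, 0 ≤ τ → wt 0 τ = 0 := fun τ hτ =>
    (hwt 0 τ).eq_of_eqOn_Ici (hasDerivAt_const τ 0) hτ hclamp
  have hwtt0 : ∀ τ, 0 ≤ τ → wtt 0 τ = 0 := fun τ hτ =>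
    (hwtt 0 τ).eq_of_eqOn_Ici (hasDerivAt_const τ 0) hτ hwt0
  have hbc' : ∀ τ, 0 ≤ τ → C * wzt 1 τ = -γ * U' τ := fun τ hτ =>
    ((hwzt' 1 τ).const_mul C).eq_of_eqOn_Ici ((hU τ).const_mul (-γ)) hτ hbc
  have hpde' : ∀ τ, 0 ≤ τ → ∀ z ∈ Icc (0:ℝ) 1, ρ * wttt z τ = C * wzzt z τ - b * wtt z τ :=
    fun τ hτ z hz => ((hwttt z τ).const_mul ρ).eq_of_eqOn_Ici
      (((hwzzt z τ).const_mul C).sub ((hwtt z τ).const_mul b)) hτ (hpde z hz)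
  have hstorage := fun τ => hasDerivAt_closedLoopStorage (C := C) (ρ := ρ) (Ki := Ki)
    (Ustar := Ustar) hwztc hwttc hwzttc hwtttc hwztt hwttt (hU τ)
  have hanti : AntitoneOn (closedLoopStorage C ρ Ki Ustar wzt wtt U) (Ici 0) :=
    antitoneOn_of_hasDerivWithinAt_nonpos (convex_Ici 0)
      (fun τ _ => (hstorage τ).continuousAt.continuousWithinAt)
      (fun τ _ => (hstorage τ).hasDerivWithinAt)
      (fun τ hτ => storage_rate_nonpos hb.le hKp.le (hwzzt' · τ) (hwztt' · τ)
        (hwzztc.uncurry_right τ) (hwzttc.uncurry_right τ)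
        (hpde' τ (interior_subset hτ)) (hwtt0 τ (interior_subset hτ))
        (hbc' τ (interior_subset hτ)) (hlaw τ (interior_subset hτ)))
  have hbound := (lowerGain_mul_le_closedLoopStorage hC.ne' hρ.ne' (hwztc.uncurry_right t)
    (hwttc.uncurry_right t)).trans ((hanti (mem_Ici.2 le_rfl) ht ht).trans
      (closedLoopStorage_le_upperGain_mul hC.ne' hρ.ne' (hwztc.uncurry_right 0)
        (hwttc.uncurry_right 0)))
  have hγ₁ : 0 < lowerGain C ρ Ki := by unfold lowerGain; positivity
  rw [div_mul_eq_mul_div]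
  exact (le_div_iff₀ hγ₁).2 ((mul_comm _ _).trans_le hbound)

/-- Proposition 3, concrete stability bound for the input-shaping closed
loop: M(t) ≤ (γ₂/γ₁)·M(0) for all t ≥ 0. -/
theorem input_shaping_stability_bound
    (ρ C b : ℝ) (hρ : 0 < ρ) (hC : 0 < C) (hb : 0 < b)
    (w wz wt wzz wzt wtt : ℝ → ℝ → ℝ)
    (hwz : ∀ z t : ℝ, HasDerivAt (fun ζ => w ζ t) (wz z t) z)
    (hwt : ∀ z t : ℝ, HasDerivAt (fun τ => w z τ) (wt z t) t)
    (hwzz : ∀ z t : ℝ, HasDerivAt (fun ζ => wz ζ t) (wzz z t) z)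
    (hwzt : ∀ z t : ℝ, HasDerivAt (fun ζ => wt ζ t) (wzt z t) z)
    (hwzt' : ∀ z t : ℝ, HasDerivAt (fun τ => wz z τ) (wzt z t) t)
    (hwtt : ∀ z t : ℝ, HasDerivAt (fun τ => wt z τ) (wtt z t) t)
    (hwzc : Continuous (Function.uncurry wz))
    (hwtc : Continuous (Function.uncurry wt))
    (hwzzc : Continuous (Function.uncurry wzz))
    (hwztc : Continuous (Function.uncurry wzt))
    (hwttc : Continuous (Function.uncurry wtt))
    (hpde : ∀ z ∈ Set.Icc (0:ℝ) 1, ∀ t : ℝ, 0 ≤ t →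
      ρ * wtt z t = C * wzz z t - b * wt z t)
    (hclamp : ∀ t : ℝ, 0 ≤ t → w 0 t = 0)
    (wzzt wztt wttt : ℝ → ℝ → ℝ)
    (hwzzt : ∀ z t : ℝ, HasDerivAt (fun τ => wzz z τ) (wzzt z t) t)
    (hwzzt' : ∀ z t : ℝ, HasDerivAt (fun ζ => wzt ζ t) (wzzt z t) z)
    (hwztt : ∀ z t : ℝ, HasDerivAt (fun τ => wzt z τ) (wztt z t) t)
    (hwztt' : ∀ z t : ℝ, HasDerivAt (fun ζ => wtt ζ t) (wztt z t) z)
    (hwttt : ∀ z t : ℝ, HasDerivAt (fun τ => wtt z τ) (wttt z t) t)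
    (hwzztc : Continuous (Function.uncurry wzzt))
    (hwzttc : Continuous (Function.uncurry wztt))
    (hwtttc : Continuous (Function.uncurry wttt))
    (γ Ki Kp Ustar : ℝ) (hγ : 0 < γ) (hKi : 0 < Ki) (hKp : 0 < Kp)
    (U U' : ℝ → ℝ)
    (hU : ∀ t : ℝ, HasDerivAt U (U' t) t) (hU'c : Continuous U')
    (hbc : ∀ t : ℝ, 0 ≤ t → C * wz 1 t = -γ * U t)
    (hlaw : ∀ t : ℝ, 0 ≤ t → Kp * U' t = -Ki * (U t - Ustar) + γ * wtt 1 t) :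
    ∀ t : ℝ, 0 ≤ t →
      ((∫ z in (0:ℝ)..1, ((C * wzt z t)^2 + (wtt z t)^2 + (wzt z t)^2 + (ρ * wtt z t)^2)) + (U t - Ustar)^2)
        ≤ ((1/4) * max (max (1/C) C) (max (max ρ (1/ρ)) (2*Ki)))
            / ((1/4) * min (min (1/C) C) (min (min ρ (1/ρ)) (2*Ki)))
          * ((∫ z in (0:ℝ)..1, ((C * wzt z (0:ℝ))^2 + (wtt z (0:ℝ))^2 + (wzt z (0:ℝ))^2 + (ρ * wtt z (0:ℝ))^2)) + (U (0:ℝ) - Ustar)^2) :=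
  input_shaping_stability_bound_general ρ C b hρ hC hb w wz wt wzz wzt wtt hwt hwzt' hwtt hwztc
    hwttc hpde hclamp wzzt wztt wttt hwzzt hwzzt' hwztt hwztt' hwttt hwzztc hwzttc hwtttc γ Ki Kp
    Ustar hKi hKp U U' hU hbc hlaw
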